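/- arXiv:2205.11172 — 4 statements merged into one kernel-verified Lean document; each statement's English description precedes it below -/
import Mathlib

section
/- Let L be a real symmetric n×n matrix with eigendecomposition L = U Λ Uᵀ where U is orthogonal and Λ = diag(λ_1,...,λ_n) with pairwise distinct λ_i. Suppose X ∈ ℝ^{n×d} is such that no row of Uᵀ X is zero. Then for every Z ∈ ℝ^n there exist a polynomial g and a vector W ∈ ℝ^d such that g(L)·X·W = Z. -/
open Matrix

-- hyperplane avoidance
lemma avoid {d : ℕ} {ι : Type*} (s : Finset ι) (y : ι → Fin d → ℝ)
    (hy : ∀ i ∈ s, y i ≠ 0) : ∃ W : Fin d → ℝ, ∀ i ∈ s, y i ⬝ᵥ W ≠ 0 := by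
  classical
  induction s using Finset.cons_induction with
  | empty => exact ⟨0, by simp⟩
  | cons a s ha ih =>
    obtain ⟨W, hW⟩ := ih (fun i hi => hy i (Finset.mem_cons_of_mem hi))
    have hya : y a ≠ 0 := hy a (Finset.mem_cons_self a s)
    obtain ⟨j, hj⟩ : ∃ j, y a j ≠ 0 := by
      by_contra h; push_neg at h; exact hya (funext h)
    set v : Fin d → ℝ := Pi.single j 1 with hv
    have hav : y a ⬝ᵥ v ≠ 0 := by
      simpa [hv, dotProduct, Pi.single_apply] using hj
    set T : Finset ℝ := (insert a s).image (fun i => -(y i ⬝ᵥ W) / (y i ⬝ᵥ v)) with hT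
    obtain ⟨t, ht⟩ := Infinite.exists_notMem_finset T
    refine ⟨W + t • v, ?_⟩
    intro i hi
    have hdot : y i ⬝ᵥ (W + t • v) = y i ⬝ᵥ W + t * (y i ⬝ᵥ v) := by
      simp [dotProduct_add, dotProduct_smul, smul_eq_mul]
    rw [hdot]
    rcases Finset.mem_cons.mp hi with rfl | his
    · intro h
      apply ht
      rw [hT]
      refine Finset.mem_image.mpr ⟨i, Finset.mem_insert_self i s, ?_⟩
      rw [div_eq_iff hav]
      linarith
    · by_cases hiv : y i ⬝ᵥ v = 0
      · simpa [hiv] using hW i his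
      · intro h
        apply ht
        rw [hT]
        refine Finset.mem_image.mpr ⟨i, Finset.mem_insert_of_mem his, ?_⟩
        rw [div_eq_iff hiv]
        linarith

theorem stmt_2 (n d : ℕ) (L U : Matrix (Fin n) (Fin n) ℝ) (lam : Fin n → ℝ)
    (hU : U * Uᵀ = 1) (hL : L = U * Matrix.diagonal lam * Uᵀ)
    (hlam : Function.Injective lam)
    (X : Matrix (Fin n) (Fin d) ℝ) (hX : ∀ i, (Uᵀ * X) i ≠ 0) :
    ∀ Z : Fin n → ℝ, ∃ (g : Polynomial ℝ) (W : Fin d → ℝ),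
      ((Polynomial.aeval L) g * X).mulVec W = Z := by
  classical
  intro Z
  have hUU : Uᵀ * U = 1 := mul_eq_one_comm.mp hU
  -- conjugation alg hom
  let f : Matrix (Fin n) (Fin n) ℝ →ₐ[ℝ] Matrix (Fin n) (Fin n) ℝ :=
    { toFun := fun M => U * M * Uᵀ
      map_one' := by simpa using hU
      map_mul' := fun A B => by
        show U * (A * B) * Uᵀ = U * A * Uᵀ * (U * B * Uᵀ)
        calc U * (A * B) * Uᵀ = U * A * (1 : Matrix (Fin n) (Fin n) ℝ) * B * Uᵀ := by
              noncomm_ring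
          _ = U * A * Uᵀ * (U * B * Uᵀ) := by rw [← hUU]; noncomm_ring
      map_zero' := by simp
      map_add' := fun A B => by noncomm_ring
      commutes' := fun r => by
        simp [Algebra.algebraMap_eq_smul_one, Matrix.mul_smul, Matrix.smul_mul, hU] }
  set Y := Uᵀ * X with hY
  obtain ⟨W, hW⟩ := avoid Finset.univ (fun i => Y i) (fun i _ => hX i)
  set vv : Fin n → ℝ := Y.mulVec W with hvv
  have hvv0 : ∀ i, vv i ≠ 0 := fun i => by
    simpa [hvv, Matrix.mulVec] using hW i (Finset.mem_univ i)
  set c : Fin n → ℝ := Uᵀ.mulVec Z with hc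
  set g : Polynomial ℝ := Lagrange.interpolate Finset.univ lam (fun i => c i / vv i) with hg
  have hgval : ∀ i, g.eval (lam i) = c i / vv i := fun i =>
    Lagrange.eval_interpolate_at_node _ (hlam.injOn) (Finset.mem_univ i)
  refine ⟨g, W, ?_⟩
  -- aeval L g = U * diagonal (g.eval ∘ lam) * Uᵀ
  have hdiag : Polynomial.aeval (Matrix.diagonal lam) g
      = Matrix.diagonal (fun i => g.eval (lam i)) := by
    have h1 : Matrix.diagonal lam = Matrix.diagonalAlgHom (n := Fin n) (α := ℝ) ℝ lam := rfl
    have h2 : (Polynomial.aeval lam g : Fin n → ℝ) = fun i => g.eval (lam i) := by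
      funext i
      set_option linter.unnecessarySimpa false in
      have := Polynomial.aeval_algHom_apply (Pi.evalAlgHom ℝ (fun _ : Fin n => ℝ) i) lam g
      simpa using this.symm
    rw [h1, Polynomial.aeval_algHom_apply, Matrix.diagonalAlgHom_apply, h2]
  have hLf : L = f (Matrix.diagonal lam) := hL
  have hconj : Polynomial.aeval L g = U * Matrix.diagonal (fun i => g.eval (lam i)) * Uᵀ := by
    rw [hLf, Polynomial.aeval_algHom_apply, hdiag]
    rfl
  rw [hconj]
  have key : (U * Matrix.diagonal (fun i => g.eval (lam i)) * Uᵀ * X).mulVec W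
      = U.mulVec ((Matrix.diagonal (fun i => g.eval (lam i))).mulVec (Y.mulVec W)) := by
    rw [hY, Matrix.mul_assoc, Matrix.mul_assoc, ← Matrix.mulVec_mulVec, ← Matrix.mulVec_mulVec]
  rw [key]
  have hmid : (Matrix.diagonal (fun i => g.eval (lam i))).mulVec (Y.mulVec W) = c := by
    funext i
    rw [Matrix.mulVec_diagonal]
    rw [show Y.mulVec W i = vv i from rfl, hgval i]
    exact div_mul_cancel₀ _ (hvv0 i)
  rw [hmid, hc, Matrix.mulVec_mulVec, hU, Matrix.one_mulVec]
end

section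
/- Let L be a real symmetric n×n matrix with pairwise distinct eigenvalues, and let P be a permutation matrix such that Pᵀ L P = L. Then P² = I; i.e., every permutation that is a symmetry of L has order at most 2. -/
open Matrix

theorem stmt_4 (n : ℕ) (L U : Matrix (Fin n) (Fin n) ℝ) (lam : Fin n → ℝ)
    (hU : U * Uᵀ = 1) (hL : L = U * Matrix.diagonal lam * Uᵀ)
    (hlam : Function.Injective lam)
    (σ : Equiv.Perm (Fin n)) (P : Matrix (Fin n) (Fin n) ℝ)
    (hP : P = fun i j => if σ j = i then (1 : ℝ) else 0)
    (hsym : Pᵀ * L * P = L) :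
    P * P = 1 := by
  have hUt : Uᵀ * U = 1 := mul_eq_one_comm.mp hU
  have h1 : Pᵀ * P = 1 := by
    subst hP
    ext i j
    erw [Matrix.mul_apply]
    simp only [Matrix.transpose, Matrix.of_apply]
    simp [Matrix.mul_apply, Matrix.transpose_apply, Matrix.one_apply, ite_and,
      Finset.sum_ite_eq, σ.injective.eq_iff, eq_comm]
  have h2 : P * Pᵀ = 1 := mul_eq_one_comm.mp h1
  -- L commutes with P
  have hcomm : L * P = P * L := by
    calc L * P = (P * Pᵀ) * L * P := by rw [h2, one_mul]
    _ = P * (Pᵀ * L * P) := by noncomm_ring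
    _ = P * L := by rw [hsym]
  set D := Matrix.diagonal lam with hD
  set M := Uᵀ * P * U with hM
  have hPM : P = U * M * Uᵀ := by
    rw [hM]
    calc P = (U * Uᵀ) * P * (U * Uᵀ) := by rw [hU, one_mul, mul_one]
    _ = U * (Uᵀ * P * U) * Uᵀ := by noncomm_ring
  have hMD : M * D = D * M := by
    have hDL : D = Uᵀ * L * U := by
      rw [hL]
      calc D = 1 * D * 1 := by rw [one_mul, mul_one]
      _ = (Uᵀ * U) * D * (Uᵀ * U) := by rw [hUt]
      _ = Uᵀ * (U * D * Uᵀ) * U := by noncomm_ring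
    rw [hM, hDL]
    calc (Uᵀ * P * U) * (Uᵀ * L * U) = Uᵀ * P * (U * Uᵀ) * L * U := by noncomm_ring
    _ = Uᵀ * (L * P) * U := by rw [hU, hcomm]; noncomm_ring
    _ = Uᵀ * L * (P * U) := by noncomm_ring
    _ = Uᵀ * L * ((U * Uᵀ) * (P * U)) := by rw [hU, one_mul]
    _ = (Uᵀ * L * U) * (Uᵀ * P * U) := by noncomm_ring
  have hMdiag : M = Matrix.diagonal (fun i => M i i) := by
    ext i j
    by_cases hij : i = j
    · subst hij; simp
    · have h := congrFun (congrFun hMD i) j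
      rw [show (M * D) i j = (M * D) i j from rfl] at h
      rw [hD] at h
      rw [Matrix.mul_diagonal, Matrix.diagonal_mul] at h
      have hne : lam j ≠ lam i := fun hc => hij (hlam hc).symm
      have : M i j * (lam j - lam i) = 0 := by ring_nf; linarith [h]
      rcases mul_eq_zero.mp this with h0 | h0
      · simp [Matrix.diagonal_apply_ne _ hij, h0]
      · exact absurd (by linarith) hne
  have hMt : Mᵀ = M := by
    rw [hMdiag]; exact Matrix.diagonal_transpose _
  have hMM : M * M = 1 := by
    nth_rewrite 1 [← hMt]
    rw [hM]
    calc (Uᵀ * P * U)ᵀ * (Uᵀ * P * U) = (Uᵀ * (Pᵀ * U)) * (Uᵀ * P * U) := by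
          rw [Matrix.transpose_mul, Matrix.transpose_mul, Matrix.transpose_transpose]
    _ = Uᵀ * Pᵀ * (U * Uᵀ) * P * U := by noncomm_ring
    _ = Uᵀ * (Pᵀ * P) * U := by rw [hU]; noncomm_ring
    _ = 1 := by rw [h1, mul_one, hUt]
  rw [hPM]
  calc (U * M * Uᵀ) * (U * M * Uᵀ) = U * M * (Uᵀ * U) * M * Uᵀ := by noncomm_ring
  _ = U * (M * M) * Uᵀ := by rw [hUt]; noncomm_ring
  _ = 1 := by rw [hMM, mul_one, hU]
end

section
/- Let L be a real symmetric n×n matrix with eigendecomposition L = U Λ Uᵀ, U orthogonal, Λ diagonal with pairwise distinct entries. Let X ∈ ℝ^{n×d} with no row of Uᵀ X equal to zero. If P is a permutation matrix with P L Pᵀ = L and P X = X, then P = I. -/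
open Matrix

theorem stmt_5 (n d : ℕ) (L U : Matrix (Fin n) (Fin n) ℝ) (lam : Fin n → ℝ)
    (hU : U * Uᵀ = 1) (hL : L = U * Matrix.diagonal lam * Uᵀ)
    (hlam : Function.Injective lam)
    (X : Matrix (Fin n) (Fin d) ℝ) (hX : ∀ i, (Uᵀ * X) i ≠ 0)
    (σ : Equiv.Perm (Fin n)) (P : Matrix (Fin n) (Fin n) ℝ)
    (hP : P = fun i j => if σ j = i then (1 : ℝ) else 0)
    (hsym : P * L * Pᵀ = L) (hfeat : P * X = X) :
    P = 1 := by
  have hUU : Uᵀ * U = 1 := mul_eq_one_comm.mp hU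
  have hPPt : Pᵀ * P = 1 := by
    ext i j
    simp only [Matrix.mul_apply, Matrix.transpose_apply, Matrix.one_apply]
    simp only [hP]
    rcases eq_or_ne i j with h | h
    · subst h
      rw [Finset.sum_eq_single (σ i) (fun k _ hk => by simp [Ne.symm hk]) (by simp)]
      simp
    · rw [if_neg h]
      apply Finset.sum_eq_zero
      intro k _
      rcases eq_or_ne (σ i) k with h1 | h1
      · have h2 : σ j ≠ k := fun h2 => h (σ.injective (h1.trans h2.symm))
        simp [h2]
      · simp [h1, fun _ => h1]
  have hPL : P * L = L * P := by
    calc P * L = P * L * (Pᵀ * P) := by rw [hPPt, mul_one]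
    _ = (P * L * Pᵀ) * P := by noncomm_ring
    _ = L * P := by rw [hsym]
  set Q := Uᵀ * P * U with hQ
  have hD : Matrix.diagonal lam = Uᵀ * L * U := by
    rw [hL]
    calc Matrix.diagonal lam = 1 * Matrix.diagonal lam * 1 := by simp
    _ = (Uᵀ * U) * Matrix.diagonal lam * (Uᵀ * U) := by rw [hUU]
    _ = Uᵀ * (U * Matrix.diagonal lam * Uᵀ) * U := by noncomm_ring
  have hcomm : Q * Matrix.diagonal lam = Matrix.diagonal lam * Q := by
    rw [hD, hQ]
    calc Uᵀ * P * U * (Uᵀ * L * U) = Uᵀ * P * (U * Uᵀ) * L * U := by noncomm_ring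
    _ = Uᵀ * (P * L) * U := by rw [hU]; noncomm_ring
    _ = Uᵀ * (L * P) * U := by rw [hPL]
    _ = Uᵀ * L * (U * Uᵀ) * P * U := by rw [hU]; noncomm_ring
    _ = Uᵀ * L * U * (Uᵀ * P * U) := by noncomm_ring
  have hoff : ∀ i j, i ≠ j → Q i j = 0 := by
    intro i j hij
    have := congrFun (congrFun hcomm i) j
    rw [Matrix.mul_diagonal, Matrix.diagonal_mul] at this
    have hne : lam j - lam i ≠ 0 := sub_ne_zero.mpr (fun h => hij (hlam h).symm)
    have : Q i j * (lam j - lam i) = 0 := by ring_nf; linarith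
    exact (mul_eq_zero.mp this).resolve_right hne
  have hQX : Q * (Uᵀ * X) = Uᵀ * X := by
    rw [hQ]
    calc Uᵀ * P * U * (Uᵀ * X) = Uᵀ * (P * ((U * Uᵀ) * X)) := by
          simp only [Matrix.mul_assoc]
    _ = Uᵀ * (P * X) := by rw [hU, Matrix.one_mul]
    _ = Uᵀ * X := by rw [hfeat]
  have hdiag : ∀ i, Q i i = 1 := by
    intro i
    obtain ⟨k, hk⟩ := Function.ne_iff.mp (hX i)
    have := congrFun (congrFun hQX i) k
    rw [Matrix.mul_apply] at this
    rw [Finset.sum_eq_single i (fun j _ hj => by rw [hoff i j (Ne.symm hj), zero_mul])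
      (fun h => absurd (Finset.mem_univ i) h)] at this
    have h2 : (Q i i - 1) * ((Uᵀ * X) i k) = 0 := by
      rw [sub_mul, one_mul, this, sub_self]
    have h3 := (mul_eq_zero.mp h2).resolve_right hk
    linarith
  have hQ1 : Q = 1 := by
    ext i j
    rcases eq_or_ne i j with h | h
    · subst h; simp [hdiag i]
    · simp [hoff i j h, Matrix.one_apply_ne h]
  have : U * Q * Uᵀ = P := by
    rw [hQ]
    calc U * (Uᵀ * P * U) * Uᵀ = (U * Uᵀ) * P * (U * Uᵀ) := by noncomm_ring
    _ = P := by rw [hU]; noncomm_ring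
  rw [← this, hQ1, mul_one, hU]
end

section
/- Let g(L) be a polynomial in a symmetric matrix L = U Λ Uᵀ with U orthogonal. Suppose I ⊆ {1,...,n} indexes a maximal linearly independent set of rows of X̃ = Uᵀ X (so every row of X̃ is a linear combination of rows indexed by I). If Z = g(L) X W, Z̃ = Uᵀ Z, and all diagonal entries of g(Λ) restricted to I are nonzero and all rows Z̃_i for i ∈ I are equal as vectors with all coordinates equal and nonzero, then all columns of Z̃ are equal. -/
/-! In the eigenbasis of `L` the filter `g(L)` becomes the diagonal matrix `g(Λ)`, so row `i` of
`Z̃ = Uᵀ Z` is `g(λᵢ)` times the image of row `i` of `X̃ = Uᵀ X` under `v ↦ v W`. Vectors with all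
coordinates equal form a subspace; since `Z̃ⱼ` is constant and `g(λⱼ) ≠ 0` for `j ∈ I`, the rows
`X̃ⱼ W` lie in it, hence so does `X̃ᵢ W` for every `i`, the row `X̃ᵢ` being a combination of the `X̃ⱼ`. -/

open Matrix Polynomial

theorem Polynomial.aeval_units_conj {R A : Type*} [CommSemiring R] [Semiring A] [Algebra R A]
    (u : Aˣ) (a : A) (p : R[X]) :
    aeval ((u : A) * a * ↑u⁻¹) p = u * aeval a p * ↑u⁻¹ :=
  aeval_algHom_apply (MulSemiringAction.toAlgEquiv R A (ConjAct.toConjAct u)) a p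

namespace Matrix

variable {R n : Type*} [CommSemiring R] [Fintype n] [DecidableEq n]

theorem aeval_diagonal (d : n → R) (p : R[X]) :
    aeval (diagonal d) p = diagonal fun i => p.eval (d i) := by
  simpa [aeval_pi_apply] using aeval_algHom_apply (diagonalAlgHom R) d p

theorem aeval_conj_diagonal_of_mul_transpose_eq_one {U : Matrix n n R} (hU : U * Uᵀ = 1)
    (d : n → R) (p : R[X]) :
    aeval (U * diagonal d * Uᵀ) p = U * diagonal (fun i => p.eval (d i)) * Uᵀ := by
  let u : (Matrix n n R)ˣ := ⟨U, Uᵀ, hU, mul_eq_one_comm.mp hU⟩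
  rw [← aeval_diagonal]
  exact aeval_units_conj u (diagonal d) p

theorem transpose_mul_aeval_conj_diagonal_mul {m : Type*} {U : Matrix n n R} (hU : U * Uᵀ = 1)
    (d : n → R) (p : R[X]) (X : Matrix n m R) :
    Uᵀ * (aeval (U * diagonal d * Uᵀ) p * X) = diagonal (fun i => p.eval (d i)) * (Uᵀ * X) := by
  rw [aeval_conj_diagonal_of_mul_transpose_eq_one hU, ← Matrix.mul_assoc, ← Matrix.mul_assoc,
    ← Matrix.mul_assoc, mul_eq_one_comm.mp hU, Matrix.one_mul, Matrix.mul_assoc]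

end Matrix

def constVectors (R ι : Type*) [Semiring R] : Submodule R (ι → R) where
  carrier := {v | ∀ a b, v a = v b}
  add_mem' hv hw a b := by simp only [Pi.add_apply, hv a b, hw a b]
  zero_mem' _ _ := rfl
  smul_mem' c _ hv a b := by simp only [Pi.smul_apply, hv a b]

theorem LinearMap.map_mem_of_mem_span_image {R M N ι : Type*} [Semiring R] [AddCommMonoid M]
    [AddCommMonoid N] [Module R M] [Module R N] (f : M →ₗ[R] N) {S : Submodule R N}
    {v : ι → M} {s : Set ι} (hs : ∀ j ∈ s, f (v j) ∈ S) {x : M}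
    (hx : x ∈ Submodule.span R (v '' s)) : f x ∈ S :=
  (Submodule.span_le (p := S.comap f)).mpr (Set.image_subset_iff.mpr hs) hx

theorem stmt_13 (n d k : ℕ) (L U : Matrix (Fin n) (Fin n) ℝ) (lam : Fin n → ℝ)
    (hU : U * Uᵀ = 1) (hL : L = U * Matrix.diagonal lam * Uᵀ)
    (I : Finset (Fin n)) (X : Matrix (Fin n) (Fin d) ℝ)
    (hspan : ∀ i : Fin n,
      (Uᵀ * X) i ∈ Submodule.span ℝ ((fun j : Fin n => (Uᵀ * X) j) '' ↑I))
    (g : Polynomial ℝ) (W : Matrix (Fin d) (Fin k) ℝ)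
    (Z Ztil : Matrix (Fin n) (Fin k) ℝ)
    (hZ : Z = (Polynomial.aeval L) g * X * W) (hZtil : Ztil = Uᵀ * Z)
    (hgI : ∀ i ∈ I, g.eval (lam i) ≠ 0)
    (hrows : ∀ i ∈ I, ∃ c : ℝ, c ≠ 0 ∧ ∀ l, Ztil i l = c) :
    ∀ l₁ l₂ : Fin k, ∀ i, Ztil i l₁ = Ztil i l₂ := by
  have hentry : ∀ i l, Ztil i l = g.eval (lam i) * ((Uᵀ * X) i ᵥ* W) l := by
    intro i l
    rw [hZtil, hZ, hL, ← Matrix.mul_assoc Uᵀ, transpose_mul_aeval_conj_diagonal_mul hU,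
      Matrix.mul_assoc, diagonal_mul, mul_apply_eq_vecMul]
  have hbasis : ∀ j ∈ (I : Set (Fin n)), (Uᵀ * X) j ᵥ* W ∈ constVectors ℝ (Fin k) := by
    intro j hj l₁ l₂
    obtain ⟨c, -, hc⟩ := hrows j hj
    exact mul_left_cancel₀ (hgI j hj) (by rw [← hentry, ← hentry, hc, hc])
  intro l₁ l₂ i
  have hrow : (Uᵀ * X) i ᵥ* W ∈ constVectors ℝ (Fin k) :=
    (vecMulLinear W).map_mem_of_mem_span_image hbasis (hspan i)
  rw [hentry i l₁, hentry i l₂, hrow l₁ l₂]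
end
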